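/- arXiv:2306.10391 — 4 statements merged into one kernel-verified Lean document; each statement's English description precedes it below -/
import Mathlib

section
/- For any C > 0, the equation cosh(μ/√(μ² − C²)) = μ/C has a solution ς with ς > C. -/
/-- For any `C > 0`, the equation `cosh(μ/√(μ² − C²)) = μ/C` has a solution `ς > C`. -/
theorem exists_sol (C : ℝ) (hC : 0 < C) :
    ∃ ς : ℝ, C < ς ∧ Real.cosh (ς / Real.sqrt (ς ^ 2 - C ^ 2)) = ς / C := by
  set f : ℝ → ℝ := fun μ => Real.cosh (μ / Real.sqrt (μ ^ 2 - C ^ 2)) - μ / C with hf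
  set a : ℝ := Real.sqrt 2 * C with ha
  set b : ℝ := 8 * C with hb
  have h2 : (1 : ℝ) < Real.sqrt 2 := by
    have := Real.lt_sqrt (x := 1) (y := 2) zero_le_one
    rw [this]; norm_num
  have hs2 : Real.sqrt 2 < 2 := by
    have : Real.sqrt 2 < Real.sqrt 4 := by
      apply Real.sqrt_lt_sqrt <;> norm_num
    simpa [show (4:ℝ) = 2^2 by norm_num, Real.sqrt_sq] using this
  have hCa : C < a := by
    have := mul_lt_mul_of_pos_right h2 hC
    simpa [ha] using this
  have hab : a ≤ b := by
    nlinarith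
  -- continuity on [a, b]
  have hpos : ∀ x ∈ Set.Icc a b, 0 < x ^ 2 - C ^ 2 := by
    intro x hx
    have hx1 : C < x := lt_of_lt_of_le hCa hx.1
    nlinarith
  have hcont : ContinuousOn f (Set.Icc a b) := by
    apply ContinuousOn.sub
    · apply Real.continuous_cosh.comp_continuousOn
      apply ContinuousOn.div continuousOn_id
      · exact ((continuous_pow 2).sub continuous_const).sqrt.continuousOn
      · intro x hx
        exact ne_of_gt (Real.sqrt_pos.mpr (hpos x hx))
    · exact (continuous_id.div_const C).continuousOn
  -- value at a
  have hsa : Real.sqrt (a ^ 2 - C ^ 2) = C := by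
    have : a ^ 2 - C ^ 2 = C ^ 2 := by
      rw [ha, mul_pow, Real.sq_sqrt (by norm_num : (2:ℝ) ≥ 0)]; ring
    rw [this, Real.sqrt_sq hC.le]
  have hfa : 0 < f a := by
    have haC : a / C = Real.sqrt 2 := by
      field_simp [ha]
      rw [ha]; ring
    rw [hf]
    simp only [hsa, haC, sub_pos]
    have h1 : Real.sqrt 2 < Real.sinh (Real.sqrt 2) :=
      Real.self_lt_sinh_iff.mpr (by positivity)
    have h2' : Real.sinh (Real.sqrt 2) < Real.cosh (Real.sqrt 2) := by
      rw [Real.cosh_eq, Real.sinh_eq]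
      have := Real.exp_pos (-(Real.sqrt 2))
      linarith
    linarith
  -- value at b
  have hsb : Real.sqrt (b ^ 2 - C ^ 2) = Real.sqrt 63 * C := by
    have : b ^ 2 - C ^ 2 = 63 * C ^ 2 := by rw [hb]; ring
    rw [this, Real.sqrt_mul (by norm_num : (63:ℝ) ≥ 0), Real.sqrt_sq hC.le]
  have hfb : f b < 0 := by
    have hbC : b / C = 8 := by field_simp [hb]; rw [hb]; ring
    have h63 : (0:ℝ) < Real.sqrt 63 := Real.sqrt_pos.mpr (by norm_num)
    have ht : b / (Real.sqrt 63 * C) = 8 / Real.sqrt 63 := by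
      rw [hb]; field_simp
    rw [hf]
    simp only [hsb, hbC, ht, sub_neg]
    have hle : Real.cosh (8 / Real.sqrt 63) ≤ Real.exp ((8 / Real.sqrt 63) ^ 2 / 2) :=
      Real.cosh_le_exp_half_sq _
    have hsq : (8 / Real.sqrt 63) ^ 2 / 2 = 32 / 63 := by
      rw [div_pow, Real.sq_sqrt (by norm_num : (63:ℝ) ≥ 0)]; norm_num
    have h1 : Real.exp (32 / 63) ≤ Real.exp 1 := Real.exp_le_exp.mpr (by norm_num)
    have h2 : Real.exp 1 < 2.7182818286 := Real.exp_one_lt_d9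
    rw [hsq] at hle
    linarith
  -- IVT
  have := intermediate_value_Icc' hab hcont
  have h0 : (0 : ℝ) ∈ Set.Icc (f b) (f a) := ⟨hfb.le, hfa.le⟩
  obtain ⟨ς, hςmem, hς⟩ := this h0
  refine ⟨ς, lt_of_lt_of_le hCa hςmem.1, ?_⟩
  have hz : f ς = 0 := hς
  rw [hf] at hz
  simp only [sub_eq_zero] at hz
  exact hz
end

section
/- If C > 0 and ς > C satisfies cosh(ς/√(ς² − C²)) = ς/C, then the maximum value of f(μ) = (1/μ) arccosh(μ/C) on (C, ∞) is f(ς) = 1/√(ς² − C²). -/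
/-- Inverse hyperbolic cosine on `[1, ∞)`. -/
noncomputable def arcosh (x : ℝ) : ℝ := Real.log (x + Real.sqrt (x ^ 2 - 1))

/-- Tangent-line inequality for `cosh` at a nonnegative point. -/
lemma cosh_tangent_le (t₀ t : ℝ) (h : 0 ≤ t₀) :
    Real.cosh t₀ + Real.sinh t₀ * (t - t₀) ≤ Real.cosh t := by
  have hd : t = t₀ + (t - t₀) := by ring
  set d := t - t₀ with hdd
  rw [hd, Real.cosh_add]
  have h1 : 0 ≤ Real.sinh t₀ := Real.sinh_nonneg_iff.mpr h
  have h2 : d + 1 ≤ Real.exp d := Real.add_one_le_exp d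
  have h3 : 1 ≤ Real.cosh d := Real.one_le_cosh d
  have h4 : Real.cosh d + Real.sinh d = Real.exp d := Real.cosh_add_sinh d
  have h5 : 0 < Real.exp (-t₀) := Real.exp_pos _
  have h6 : Real.cosh t₀ - Real.sinh t₀ = Real.exp (-t₀) := Real.cosh_sub_sinh t₀
  nlinarith [mul_nonneg h1 (by linarith : (0:ℝ) ≤ Real.exp d - 1 - d),
    mul_le_mul_of_nonneg_left h3 h5.le]

/-- `arcosh` inverts `cosh` on nonnegative reals. -/
lemma arcosh_cosh (y : ℝ) (h : 0 ≤ y) : arcosh (Real.cosh y) = y := by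
  have hs : Real.cosh y ^ 2 - 1 = Real.sinh y ^ 2 := by
    have := Real.cosh_sq y; linarith
  rw [arcosh, hs, Real.sqrt_sq (Real.sinh_nonneg_iff.mpr h), Real.cosh_add_sinh,
    Real.log_exp]

/-- If `C > 0` and `ς > C` satisfies `cosh(ς/√(ς² − C²)) = ς/C`, then the maximum value of
`f(μ) = (1/μ) arccosh(μ/C)` on `(C, ∞)` is `f(ς) = 1/√(ς² − C²)`. -/
theorem f_max_value (C ς : ℝ) (hC : 0 < C) (hς : C < ς)
    (heq : Real.cosh (ς / Real.sqrt (ς ^ 2 - C ^ 2)) = ς / C)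
    (f : ℝ → ℝ) (hf : ∀ μ, f μ = (1 / μ) * arcosh (μ / C)) :
    (∀ μ ∈ Set.Ioi C, f μ ≤ f ς) ∧ f ς = 1 / Real.sqrt (ς ^ 2 - C ^ 2) := by
  have hςpos : 0 < ς := lt_trans hC hς
  have hsq : 0 < ς ^ 2 - C ^ 2 := by nlinarith
  set s := Real.sqrt (ς ^ 2 - C ^ 2) with hs
  have hspos : 0 < s := Real.sqrt_pos.mpr hsq
  have hssq : s ^ 2 = ς ^ 2 - C ^ 2 := Real.sq_sqrt hsq.le
  set t₀ := ς / s with ht₀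
  have ht₀pos : 0 < t₀ := div_pos hςpos hspos
  -- sinh t₀ = s / C
  have hsinh : Real.sinh t₀ = s / C := by
    have h1 : Real.sinh t₀ ^ 2 = (s / C) ^ 2 := by
      have := Real.cosh_sq t₀
      rw [heq] at this
      field_simp at this ⊢
      nlinarith
    have h2 : 0 ≤ Real.sinh t₀ := Real.sinh_nonneg_iff.mpr ht₀pos.le
    have h3 : 0 < s / C := div_pos hspos hC
    nlinarith
  -- f ς = 1 / s
  have hfς : f ς = 1 / s := by
    rw [hf]
    have : arcosh (ς / C) = t₀ := by rw [← heq, arcosh_cosh t₀ ht₀pos.le]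
    rw [this, ht₀]
    field_simp
  refine ⟨fun μ hμ => ?_, hfς⟩
  have hμC : C < μ := hμ
  have hμpos : 0 < μ := lt_trans hC hμC
  -- key: cosh (μ/s) ≥ μ/C
  have hkey : μ / C ≤ Real.cosh (μ / s) := by
    have := cosh_tangent_le t₀ (μ / s) ht₀pos.le
    rw [heq, hsinh] at this
    have e : ς / C + s / C * (μ / s - ς / s) = μ / C := by field_simp; ring
    linarith [e ▸ this]
  -- arcosh (μ/C) ≤ μ/s
  have harc : arcosh (μ / C) ≤ μ / s := by
    have h1 : 1 < μ / C := (one_lt_div hC).mpr hμC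
    set a := arcosh (μ / C) with ha
    have hcosh_a : Real.cosh a = μ / C := by
      have hx : 0 ≤ (μ / C) ^ 2 - 1 := by nlinarith
      have hsx : Real.sqrt ((μ / C) ^ 2 - 1) ^ 2 = (μ / C) ^ 2 - 1 := Real.sq_sqrt hx
      have hpos : 0 < μ / C + Real.sqrt ((μ / C) ^ 2 - 1) := by
        positivity
      rw [ha, arcosh, Real.cosh_eq, Real.exp_log hpos, Real.exp_neg,
        Real.exp_log hpos, inv_eq_one_div]
      have hq : Real.sqrt (μ ^ 2 - C ^ 2) ^ 2 = μ ^ 2 - C ^ 2 :=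
        Real.sq_sqrt (by nlinarith)
      field_simp
      have hq2 : C ^ 2 * Real.sqrt ((μ ^ 2 - C ^ 2) / C ^ 2) ^ 2 = μ ^ 2 - C ^ 2 := by
        rw [Real.sq_sqrt (div_nonneg (by nlinarith) (sq_nonneg C))]
        field_simp
      linear_combination hq2
    have hanneg : 0 ≤ a := by
      rw [ha, arcosh]
      apply Real.log_nonneg
      nlinarith [Real.sqrt_nonneg ((μ / C) ^ 2 - 1)]
    have : Real.cosh a ≤ Real.cosh (μ / s) := by rw [hcosh_a]; exact hkey
    have habs : |a| ≤ |μ / s| := Real.cosh_le_cosh.mp this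
    rw [abs_of_nonneg hanneg, abs_of_nonneg (by positivity : (0:ℝ) ≤ μ / s)] at habs
    exact habs
  rw [hf, hfς]
  calc (1 / μ) * arcosh (μ / C) ≤ (1 / μ) * (μ / s) := by
        apply mul_le_mul_of_nonneg_left harc (by positivity)
    _ = 1 / s := by field_simp
end

section
/- Let C > 0, b > C, and t₀ = (b − C)/(bC). For φ(t) = (1/b) cosh⁻¹(1 + bt) (so with α = 1/b, αb = 1), the inequality −b(1 + bt)/((1 + bt)² − 1 + 1) ≤ −C holds for all t ∈ [0, t₀]; equivalently φ''(t)/φ'(t) ≤ −C(1 + (φ'(t))²) on (0, t₀]. -/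
/-- For `C > 0`, `b > C`, `t₀ = (b − C)/(bC)` and `φ(t) = (1/b) arccosh(1 + bt)` (so `α = 1/b`,
`αb = 1`), the inequality `−b(1+bt)/((1+bt)² − 1 + 1) ≤ −C` holds on `[0, t₀]`; equivalently
`φ''(t)/φ'(t) ≤ −C(1 + φ'(t)²)` on `(0, t₀]`, where `φ'(t) = ((1+bt)² − 1)^{-1/2}` and
`φ''(t) = −b(1+bt)/((1+bt)² − 1)^{3/2}`. -/
theorem barrier_ineq (C b : ℝ) (hC : 0 < C) (hb : C < b)
    (t₀ : ℝ) (ht₀ : t₀ = (b - C) / (b * C))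
    (φ φ' φ'' : ℝ → ℝ)
    (hφ : ∀ t, φ t = (1 / b) * arcosh (1 + b * t))
    (hφ' : ∀ t, φ' t = 1 / Real.sqrt ((1 + b * t) ^ 2 - 1))
    (hφ'' : ∀ t, φ'' t = -(b * (1 + b * t)) / ((1 + b * t) ^ 2 - 1) ^ ((3 : ℝ) / 2)) :
    (∀ t ∈ Set.Icc 0 t₀, -(b * (1 + b * t)) / ((1 + b * t) ^ 2 - 1 + 1) ≤ -C) ∧
      (∀ t ∈ Set.Ioc 0 t₀, φ'' t / φ' t ≤ -C * (1 + φ' t ^ 2)) := by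
  have hb0 : 0 < b := lt_trans hC hb
  have hbC : 0 < b * C := mul_pos hb0 hC
  have ht₀' : b * C * t₀ = b - C := by
    rw [ht₀]; field_simp
  -- key bound: for t ≤ t₀, C * (1 + b*t) ≤ b
  have key : ∀ t : ℝ, t ≤ t₀ → C * (1 + b * t) ≤ b := by
    intro t ht
    nlinarith [mul_le_mul_of_nonneg_left ht (le_of_lt hbC)]
  constructor
  · intro t ht
    obtain ⟨ht0, ht1⟩ := ht
    have hu : (1 : ℝ) ≤ 1 + b * t := by nlinarith
    have hu0 : 0 < 1 + b * t := by linarith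
    have hkey := key t ht1
    have hden : (1 + b * t) ^ 2 - 1 + 1 = (1 + b * t) ^ 2 := by ring
    rw [hden, div_le_iff₀ (by positivity)]
    nlinarith
  · intro t ht
    obtain ⟨ht0, ht1⟩ := ht
    have hu : (1 : ℝ) < 1 + b * t := by nlinarith
    have hu0 : 0 < 1 + b * t := by linarith
    set u := 1 + b * t with hudef
    have hs : 0 < u ^ 2 - 1 := by nlinarith
    have hsq : Real.sqrt (u ^ 2 - 1) > 0 := Real.sqrt_pos.mpr hs
    have hsqsq : Real.sqrt (u ^ 2 - 1) ^ 2 = u ^ 2 - 1 := Real.sq_sqrt hs.le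
    have h32 : (u ^ 2 - 1) ^ ((3 : ℝ) / 2) = (u ^ 2 - 1) * Real.sqrt (u ^ 2 - 1) := by
      rw [show (3 : ℝ) / 2 = 1 + 1 / 2 by norm_num, Real.rpow_add hs, Real.rpow_one,
        Real.sqrt_eq_rpow]
    have hkey := key t ht1
    rw [hφ', hφ'', h32, ← hudef]
    have hkey' : C * u ≤ b := by rw [hudef]; exact hkey
    have hL : -(b * u) / ((u ^ 2 - 1) * Real.sqrt (u ^ 2 - 1)) / (1 / Real.sqrt (u ^ 2 - 1))
        = -(b * u) / (u ^ 2 - 1) := by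
      rw [div_div_div_eq, div_eq_div_iff (by positivity) hs.ne']
      nlinarith [hsqsq]
    have h2 : (1 / Real.sqrt (u ^ 2 - 1)) ^ 2 = 1 / (u ^ 2 - 1) := by
      rw [div_pow, hsqsq, one_pow]
    have h3 : -C * (1 + 1 / (u ^ 2 - 1)) * (u ^ 2 - 1) = -C * (u ^ 2 - 1 + 1) := by
      field_simp
    rw [hL, h2, div_le_iff₀ hs, h3]
    nlinarith [mul_le_mul_of_nonneg_right hkey' hu0.le]
end

section
/- Let C > 0 and b > C, and set g(t) = φ'(t)/√(1 + φ'(t)²) where φ(t) = (1/b) arccosh(1 + bt). Then for 0 < t ≤ t₀ = (b − C)/(bC), one has g(t) > 0 and g'(t)/g(t) ≤ −C. -/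
/-- For `C > 0`, `b > C`, `t₀ = (b − C)/(bC)` and `g = φ'/√(1 + φ'²)` where
`φ(t) = (1/b) arccosh(1 + bt)`, one has `g(t) > 0` and `g'(t)/g(t) ≤ −C` on `(0, t₀]`. -/
theorem g_ineq (C b : ℝ) (hC : 0 < C) (hb : C < b)
    (t₀ : ℝ) (ht₀ : t₀ = (b - C) / (b * C))
    (φ φ' g : ℝ → ℝ)
    (hφ : ∀ t, φ t = (1 / b) * arcosh (1 + b * t))
    (hφ' : ∀ t, 0 < t → HasDerivAt φ (φ' t) t)
    (hφ'val : ∀ t, φ' t = 1 / Real.sqrt ((1 + b * t) ^ 2 - 1))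
    (hg : ∀ t, g t = φ' t / Real.sqrt (1 + φ' t ^ 2)) :
    ∀ t ∈ Set.Ioc 0 t₀, 0 < g t ∧ deriv g t / g t ≤ -C := by
  have hb0 : (0:ℝ) < b := hC.trans hb
  -- g(t) = 1/(1+b*t) for t > 0
  have hgval : ∀ t : ℝ, 0 < t → g t = (1 + b * t)⁻¹ := by
    intro t ht
    have h1 : (0:ℝ) < 1 + b * t := by positivity
    have hu : 0 < (1 + b * t) ^ 2 - 1 := by nlinarith [mul_pos hb0 ht, sq_nonneg (b * t)]
    set s := Real.sqrt ((1 + b * t) ^ 2 - 1) with hs_def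
    have hs : 0 < s := Real.sqrt_pos.mpr hu
    have hs2 : s ^ 2 = (1 + b * t) ^ 2 - 1 := Real.sq_sqrt hu.le
    have hphi : φ' t = 1 / s := hφ'val t
    have hsq : Real.sqrt (1 + (1 / s) ^ 2) = (1 + b * t) / s := by
      rw [show 1 + (1 / s) ^ 2 = ((1 + b * t) / s) ^ 2 by
        field_simp; nlinarith [hs2]]
      exact Real.sqrt_sq (by positivity)
    rw [hg t, hphi, hsq]
    field_simp
  intro t ⟨ht, ht0⟩
  have h1 : (0:ℝ) < 1 + b * t := by positivity
  have hgpos : 0 < g t := by rw [hgval t ht]; positivity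
  refine ⟨hgpos, ?_⟩
  -- compute deriv g t
  have hev : g =ᶠ[nhds t] fun x => (1 + b * x)⁻¹ := by
    filter_upwards [Ioi_mem_nhds ht] with x hx using hgval x hx
  have hder : HasDerivAt (fun x : ℝ => (1 + b * x)⁻¹) (-b / (1 + b * t) ^ 2) t := by
    have h : HasDerivAt (fun x : ℝ => 1 + b * x) b t := by
      simpa using ((hasDerivAt_id t).const_mul b).const_add 1
    exact h.inv h1.ne'
  have hderiv : deriv g t = -b / (1 + b * t) ^ 2 := by
    rw [hev.deriv_eq]; exact hder.deriv
  rw [hderiv, hgval t ht]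
  have h2 : t * (b * C) ≤ b - C := (le_div_iff₀ (by positivity)).mp (ht₀ ▸ ht0)
  have hle : C * (1 + b * t) ≤ b := by nlinarith
  have key : -b / (1 + b * t) ^ 2 / (1 + b * t)⁻¹ = -(b / (1 + b * t)) := by
    field_simp
  rw [key, neg_le_neg_iff, le_div_iff₀ h1]
  linarith
end
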